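/- The element C̃_𝔥 := −(1/16) Σ_{j,k,l,p} Q_𝔥([Z_j,Z_k]_𝔥, [Z_l,Z_p]_𝔥) Z_j·Z_k·Z_l·Z_p of Cl(𝔪) has only terms of degree zero and four, namely C̃_𝔥 = (1/8) Σ_{i,j} Q_𝔥([Z_i,Z_j]_𝔥,[Z_i,Z_j]_𝔥)·1 − (1/2) Σ_{i<j<k<l} ⟨Z_i, Jac_𝔥(Z_j,Z_k,Z_l)⟩ Z_i·Z_j·Z_k·Z_l, for every n = dim 𝔪 ≥ 3. -/

import Mathlib

open scoped BigOperators

/-- The quadratic form `v ↦ −⟨v,v⟩` on the subspace `𝔪`, built from a bilinear form on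
the ambient space; the associated Clifford algebra satisfies
`v·w + w·v = −2⟨v,w⟩·1` for `v,w ∈ 𝔪`. -/
noncomputable def mQF {𝔤 : Type*} [AddCommGroup 𝔤] [Module ℝ 𝔤]
    (𝔪 : Submodule ℝ 𝔤) (B : LinearMap.BilinForm ℝ 𝔤) : QuadraticForm ℝ ↥𝔪 :=
  LinearMap.BilinMap.toQuadraticMap ((-B).compl₁₂ 𝔪.subtype 𝔪.subtype)

/-- `Jac_𝔥(X,Y,Z) = [X,[Y,Z]_𝔥] + [Y,[Z,X]_𝔥] + [Z,[X,Y]_𝔥]`. -/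
noncomputable def jacH {𝔤 : Type*} [LieRing 𝔤] [LieAlgebra ℝ 𝔤]
    (p𝔥 : 𝔤 →ₗ[ℝ] 𝔤) (x y z : 𝔤) : 𝔤 :=
  ⁅x, p𝔥 ⁅y, z⁆⁆ + ⁅y, p𝔥 ⁅z, x⁆⁆ + ⁅z, p𝔥 ⁅x, y⁆⁆

/-!
With `e_i = Z_i ∈ Cl(𝔪)` we have `e_i e_j + e_j e_i = -2δ_ij`, and the coefficient
`a_{jklp} = Q_𝔥([Z_j,Z_k]_𝔥, [Z_l,Z_p]_𝔥)` is skew in `(j,k)` and in `(l,p)` and symmetric under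
`(j,k) ↔ (l,p)`. Let `S`, `S₁`, `S₂` be `Σ a_{jklp} e_j e_k e_l e_p` with `a` replaced by its
rotations `a_{jlpk}`, `a_{jpkl}`. Anticommuting one pair of neighbouring generators turns `S₁` into
`S` and `S₂` into `S₁` up to a sum `Σ g_ij e_i e_j` with `g` symmetric, i.e. up to the scalar
`-Σ g_ii`; this gives `S₁ = S + 2c` and `S₂ = S + 4c` with `c = Σ a_{ijij}`. So
`3S + 6c = Σ b_{jklp} e_j e_k e_l e_p` for the cyclic sum
`b_{jklp} = a_{jklp} + a_{jlpk} + a_{jpkl}`, which by invariance of `Q` is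
`⟨Z_j, Jac_𝔥(Z_k,Z_l,Z_p)⟩`. Both `b` and the product of distinct generators are alternating, so
this sum is `4! = 24` times its part over `j < k < l < p`.
-/

open Finset Equiv Function

theorem comp_swap_eq_self {α β : Type*} [DecidableEq α] {x : α → β} {i j : α}
    (h : x i = x j) : x ∘ swap i j = x := by
  rw [comp_swap_eq_update, h, update_eq_self, ← h, update_eq_self]

section Symmetrization
variable {α M : Type*} {m : ℕ}

theorem comp_perm_eq_smul_of_comp_swap [AddCommGroup M] (χ : Perm (Fin (m + 1)) →* ℤˣ)
    (f : (Fin (m + 1) → α) → M)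
    (hswap : ∀ (i : Fin m) x,
      f (x ∘ swap i.castSucc i.succ) = χ (swap i.castSucc i.succ) • f x)
    (σ : Perm (Fin (m + 1))) (x : Fin (m + 1) → α) : f (x ∘ σ) = χ σ • f x := by
  have hσ : σ ∈ Submonoid.closure (Set.range fun i : Fin m ↦ swap i.castSucc i.succ) := by
    rw [Perm.mclosure_swap_castSucc_succ]; trivial
  induction hσ using Submonoid.closure_induction generalizing x with
  | mem _ hs => obtain ⟨i, rfl⟩ := hs; exact hswap i x
  | one => simp
  | mul σ τ _ _ hσ hτ =>
    rw [Perm.coe_mul, ← comp_assoc, hτ, hσ, smul_smul, map_mul, mul_comm]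

theorem eq_zero_of_not_injective (b : (Fin m → α) → ℝ)
    (hb : ∀ (σ : Perm (Fin m)) x, b (x ∘ σ) = Perm.sign σ • b x) {x : Fin m → α}
    (hx : ¬ Injective x) : b x = 0 := by
  obtain ⟨i, j, hxij, hij⟩ : ∃ i j, x i = x j ∧ i ≠ j := by
    simpa [Injective] using hx
  have h := hb (swap i j) x
  rw [comp_swap_eq_self hxij, Perm.sign_swap hij, Units.neg_smul, one_smul] at h
  linarith

theorem sum_eq_factorial_smul_sum_strictMono [LinearOrder α] [Fintype α] [AddCommMonoid M]
    (f : (Fin m → α) → M) (hperm : ∀ (σ : Perm (Fin m)) x, f (x ∘ σ) = f x)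
    (hinj : ∀ x, ¬ Injective x → f x = 0) :
    ∑ x, f x = m.factorial • ∑ x, if StrictMono x then f x else 0 := by
  -- an injective tuple has exactly one sorting permutation
  have hunique : ∀ x, f x = ∑ σ : Perm (Fin m), if StrictMono (x ∘ σ) then f x else 0 := by
    intro x
    by_cases hx : Injective x
    · have hsort : StrictMono (x ∘ Tuple.sort x) :=
        (Tuple.monotone_sort x).strictMono_of_injective (hx.comp (Tuple.sort x).injective)
      rw [sum_eq_single (Tuple.sort x), if_pos hsort]
      · intro τ _ hτ
        refine if_neg fun hmono => hτ ?_
        have hrange : Set.range (x ∘ τ) = Set.range (x ∘ Tuple.sort x) := by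
          simp only [Set.range_comp, Equiv.range_eq_univ]
        exact Perm.ext fun i => hx (congrFun ((hmono.range_inj hsort).1 hrange) i)
      · simp
    · simp [hinj x hx]
  calc ∑ x, f x = ∑ σ : Perm (Fin m), ∑ x, if StrictMono (x ∘ σ) then f (x ∘ σ) else 0 := by
        rw [sum_comm]
        simp_rw [hperm]
        exact sum_congr rfl fun x _ => hunique x
    _ = ∑ _σ : Perm (Fin m), ∑ y, if StrictMono y then f y else 0 :=
        sum_congr rfl fun σ _ =>
          (σ.symm.arrowCongr (Equiv.refl α)).sum_comp fun y => if StrictMono y then f y else 0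
    _ = m.factorial • ∑ x, if StrictMono x then f x else 0 := by
        rw [sum_const, card_univ, Fintype.card_perm, Fintype.card_fin]

theorem sum_fin_four_pi [Fintype α] [AddCommMonoid M] (F : (Fin 4 → α) → M) :
    ∑ x, F x = ∑ j, ∑ k, ∑ l, ∑ p, F ![j, k, l, p] := by
  simp only [← (Fin.consEquiv fun _ => α).sum_comp, Fintype.sum_prod_type, Fintype.sum_unique]
  rfl

end Symmetrization

section CliffordFamily
variable {ι A : Type*} [DecidableEq ι] [Ring A] [Algebra ℝ A] {e : ι → A}
  (he : ∀ i j, e i * e j + e j * e i = (if i = j then -2 else 0 : ℝ) • 1)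
include he

theorem mul_swap_eq_neg_of_ne {i j : ι} (hij : i ≠ j) : e j * e i = -(e i * e j) := by
  rw [eq_neg_iff_add_eq_zero, add_comm, he, if_neg hij, zero_smul]

theorem prod_four_comp_swap (i : Fin 3) (x : Fin 4 → ι) (hx : x i.castSucc ≠ x i.succ) :
    let y := x ∘ swap i.castSucc i.succ
    e (y 0) * e (y 1) * e (y 2) * e (y 3) = -(e (x 0) * e (x 1) * e (x 2) * e (x 3)) := by
  fin_cases i
  · change e (x 1) * e (x 0) * e (x 2) * e (x 3) = _
    rw [mul_swap_eq_neg_of_ne (i := x 0) (j := x 1) he hx]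
    noncomm_ring
  · change e (x 0) * e (x 2) * e (x 1) * e (x 3) = _
    rw [mul_assoc (e (x 0)), mul_swap_eq_neg_of_ne (i := x 1) (j := x 2) he hx]
    noncomm_ring
  · change e (x 0) * e (x 1) * e (x 3) * e (x 2) = _
    rw [mul_assoc _ (e (x 3)), mul_swap_eq_neg_of_ne (i := x 2) (j := x 3) he hx]
    noncomm_ring

variable [Fintype ι]

theorem sum_smul_anticomm (x y : A) (c : ι → ℝ) (i : ι) :
    ∑ j, c j • (x * e i * e j * y + x * e j * e i * y) = (-2 * c i) • (x * y) := by
  have hpair : ∀ j, x * e i * e j * y + x * e j * e i * y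
      = (if i = j then -2 else 0 : ℝ) • (x * y) := fun j => by
    calc x * e i * e j * y + x * e j * e i * y = x * (e i * e j + e j * e i) * y := by
          noncomm_ring
      _ = _ := by rw [he, mul_smul_comm, smul_mul_assoc, mul_one]
  simp [hpair, smul_smul, mul_comm]

theorem sum_smul_mul_of_symm (g : ι → ι → ℝ) (hg : ∀ i j, g j i = g i j) :
    ∑ i, ∑ j, g i j • (e i * e j) = -(∑ i, g i i) • (1 : A) := by
  have hswap : ∑ i, ∑ j, g i j • (e j * e i) = ∑ i, ∑ j, g i j • (e i * e j) := by
    rw [sum_comm]; simp only [hg]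
  have htwice : (2 : ℝ) • ∑ i, ∑ j, g i j • (e i * e j)
      = (2 : ℝ) • (-(∑ i, g i i) • (1 : A)) := by
    calc (2 : ℝ) • ∑ i, ∑ j, g i j • (e i * e j)
        = ∑ i, ∑ j, g i j • (1 * e i * e j * 1 + 1 * e j * e i * 1) := by
          simp only [one_mul, mul_one, smul_add, sum_add_distrib, hswap, two_smul]
      _ = (2 : ℝ) • (-(∑ i, g i i) • (1 : A)) := by
          simp only [sum_smul_anticomm he, smul_smul, ← sum_smul]
          rw [← mul_sum, one_mul]
          ring_nf
  exact smul_right_injective A two_ne_zero htwice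

theorem quartic_add_swap₂₃ (t : ι → ι → ι → ι → ℝ) :
    ∑ j, ∑ k, ∑ l, ∑ p, t j k l p • (e j * e k * e l * e p)
      + ∑ j, ∑ k, ∑ l, ∑ p, t j l k p • (e j * e k * e l * e p)
      = (-2 : ℝ) • ∑ j, ∑ p, (∑ k, t j k k p) • (e j * e p) := by
  have hreindex : ∑ j, ∑ k, ∑ l, ∑ p, t j l k p • (e j * e k * e l * e p)
      = ∑ j, ∑ k, ∑ l, ∑ p, t j k l p • (e j * e l * e k * e p) :=
    sum_congr rfl fun j _ => sum_comm
  rw [hreindex]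
  simp only [← sum_add_distrib, ← smul_add]
  calc ∑ j, ∑ k, ∑ l, ∑ p, t j k l p • (e j * e k * e l * e p + e j * e l * e k * e p)
      = ∑ j, ∑ k, ∑ p, ∑ l, t j k l p • (e j * e k * e l * e p + e j * e l * e k * e p) :=
        sum_congr rfl fun j _ => sum_congr rfl fun k _ => sum_comm
    _ = _ := by
        simp only [sum_smul_anticomm he, smul_sum, smul_smul, sum_smul]
        exact sum_congr rfl fun j _ => sum_comm

theorem quartic_add_swap₃₄ (t : ι → ι → ι → ι → ℝ) :
    ∑ j, ∑ k, ∑ l, ∑ p, t j k l p • (e j * e k * e l * e p)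
      + ∑ j, ∑ k, ∑ l, ∑ p, t j k p l • (e j * e k * e l * e p)
      = (-2 : ℝ) • ∑ j, ∑ k, (∑ l, t j k l l) • (e j * e k) := by
  have hreindex : ∑ j, ∑ k, ∑ l, ∑ p, t j k p l • (e j * e k * e l * e p)
      = ∑ j, ∑ k, ∑ l, ∑ p, t j k l p • (e j * e k * e p * e l) :=
    sum_congr rfl fun j _ => sum_congr rfl fun k _ => sum_comm
  rw [hreindex]
  simp only [← sum_add_distrib, ← smul_add]
  calc ∑ j, ∑ k, ∑ l, ∑ p, t j k l p • (e j * e k * e l * e p + e j * e k * e p * e l)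
      = ∑ j, ∑ k, ∑ l, ∑ p,
          t j k l p • (e j * e k * e l * e p * 1 + e j * e k * e p * e l * 1) := by
        simp only [mul_one]
    _ = ∑ j, ∑ k, ∑ l, (-2 * t j k l l) • (e j * e k * 1) := by
        simp only [sum_smul_anticomm he]
    _ = _ := by simp only [mul_one, smul_sum, smul_smul, sum_smul]

end CliffordFamily

def cyclicSum {ι : Type*} (a : ι → ι → ι → ι → ℝ) (j k l p : ι) : ℝ :=
  a j k l p + a j l p k + a j p k l

section CyclicSum
variable {ι : Type*} {a : ι → ι → ι → ι → ℝ}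
  (h₁ : ∀ j k l p, a k j l p = -a j k l p) (h₂ : ∀ j k l p, a j k p l = -a j k l p)
  (h₃ : ∀ j k l p, a l p j k = a j k l p)
include h₂

theorem cyclicSum_swap₂₃ (j k l p : ι) : cyclicSum a j l k p = -cyclicSum a j k l p := by
  have := h₂ j l k p; have := h₂ j k l p; have := h₂ j p k l
  unfold cyclicSum; linarith

theorem cyclicSum_swap₃₄ (j k l p : ι) : cyclicSum a j k p l = -cyclicSum a j k l p := by
  have := h₂ j k l p; have := h₂ j p k l; have := h₂ j l k p
  unfold cyclicSum; linarith

include h₁ h₃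

theorem cyclicSum_swap₁₂ (j k l p : ι) : cyclicSum a k j l p = -cyclicSum a j k l p := by
  have := h₁ j k l p; have := h₃ k l p j; have := h₁ j p k l; have := h₃ k p j l
  have := h₂ j l k p
  unfold cyclicSum; linarith

theorem cyclicSum_comp_swap (i : Fin 3) (x : Fin 4 → ι) :
    let y := x ∘ swap i.castSucc i.succ
    cyclicSum a (y 0) (y 1) (y 2) (y 3) = -cyclicSum a (x 0) (x 1) (x 2) (x 3) := by
  fin_cases i
  exacts [cyclicSum_swap₁₂ h₁ h₂ h₃ .., cyclicSum_swap₂₃ h₂ .., cyclicSum_swap₃₄ h₂ ..]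

end CyclicSum

section Quartic
variable {ι A : Type*} [Fintype ι] [Ring A] [Algebra ℝ A] {e : ι → A} {a : ι → ι → ι → ι → ℝ}
  (h₁ : ∀ j k l p, a k j l p = -a j k l p) (h₂ : ∀ j k l p, a j k p l = -a j k l p)
  (h₃ : ∀ j k l p, a l p j k = a j k l p)

section
variable [DecidableEq ι] (he : ∀ i j, e i * e j + e j * e i = (if i = j then -2 else 0 : ℝ) • 1)
include he h₂ h₃

theorem quartic_cycle_eq :
    ∑ j, ∑ k, ∑ l, ∑ p, a j l p k • (e j * e k * e l * e p)
      = ∑ j, ∑ k, ∑ l, ∑ p, a j k l p • (e j * e k * e l * e p)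
        + (2 * ∑ i, ∑ j, a i j i j) • (1 : A) := by
  have h := quartic_add_swap₂₃ he fun j k l p => a j l p k
  rw [sum_smul_mul_of_symm he _ fun i j => sum_congr rfl fun k _ => h₃ i k j k] at h
  have hneg : ∑ j, ∑ k, ∑ l, ∑ p, a j k p l • (e j * e k * e l * e p)
      = -∑ j, ∑ k, ∑ l, ∑ p, a j k l p • (e j * e k * e l * e p) := by
    simp only [← sum_neg_distrib, ← neg_smul, ← h₂]
  rw [hneg] at h
  linear_combination (norm := module) h

theorem quartic_cycle_sq_eq :
    ∑ j, ∑ k, ∑ l, ∑ p, a j p k l • (e j * e k * e l * e p)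
      = ∑ j, ∑ k, ∑ l, ∑ p, a j l p k • (e j * e k * e l * e p)
        + (2 * ∑ i, ∑ j, a i j i j) • (1 : A) := by
  have h := quartic_add_swap₃₄ he fun j k l p => a j p k l
  rw [sum_smul_mul_of_symm he _ fun i j => sum_congr rfl fun k _ => h₃ i k j k] at h
  have hneg : ∑ j, ∑ k, ∑ l, ∑ p, a j l k p • (e j * e k * e l * e p)
      = -∑ j, ∑ k, ∑ l, ∑ p, a j l p k • (e j * e k * e l * e p) := by
    simp only [← sum_neg_distrib, ← neg_smul, ← h₂]
  rw [hneg] at h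
  linear_combination (norm := module) h

end

variable [LinearOrder ι] (he : ∀ i j, e i * e j + e j * e i = (if i = j then -2 else 0 : ℝ) • 1)
include he h₁ h₂ h₃

theorem sum_cyclicSum_smul_eq_sum_strictMono :
    ∑ j, ∑ k, ∑ l, ∑ p, cyclicSum a j k l p • (e j * e k * e l * e p)
      = (24 : ℝ) • ∑ j, ∑ k, ∑ l, ∑ p,
          if j < k ∧ k < l ∧ l < p then cyclicSum a j k l p • (e j * e k * e l * e p) else 0 := by
  set b : (Fin 4 → ι) → ℝ := fun x => cyclicSum a (x 0) (x 1) (x 2) (x 3)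
  set F : (Fin 4 → ι) → A := fun x => b x • (e (x 0) * e (x 1) * e (x 2) * e (x 3))
  have hb : ∀ (σ : Perm (Fin 4)) x, b (x ∘ σ) = Perm.sign σ • b x :=
    comp_perm_eq_smul_of_comp_swap Perm.sign b fun i x => by
      rw [Perm.sign_swap Fin.castSucc_lt_succ.ne, Units.neg_smul, one_smul]
      exact cyclicSum_comp_swap h₁ h₂ h₃ i x
  have hF : ∀ (σ : Perm (Fin 4)) x, F (x ∘ σ) = F x := fun σ x => by
    simpa using comp_perm_eq_smul_of_comp_swap 1 F (fun i x => by
      by_cases hx : x i.castSucc = x i.succ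
      · rw [comp_swap_eq_self hx, MonoidHom.one_apply, one_smul]
      · simp only [F, b]
        rw [cyclicSum_comp_swap h₁ h₂ h₃ i x, prod_four_comp_swap he i x hx, neg_smul_neg,
          MonoidHom.one_apply, one_smul]) σ x
  have hinj : ∀ x, ¬ Injective x → F x = 0 := fun x hx => by
    simp only [F, eq_zero_of_not_injective b hb hx, zero_smul]
  have h := sum_eq_factorial_smul_sum_strictMono F hF hinj
  rw [sum_fin_four_pi, sum_fin_four_pi] at h
  simpa [F, b, Fin.strictMono_iff_lt_succ, Fin.forall_fin_succ, Nat.factorial,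
    ← Nat.cast_smul_eq_nsmul ℝ] using h

theorem quartic_eq :
    ∑ j, ∑ k, ∑ l, ∑ p, a j k l p • (e j * e k * e l * e p)
      = (8 : ℝ) • ∑ j, ∑ k, ∑ l, ∑ p,
          (if j < k ∧ k < l ∧ l < p then cyclicSum a j k l p • (e j * e k * e l * e p) else 0)
        - (2 * ∑ i, ∑ j, a i j i j) • (1 : A) := by
  have h : ∑ j, ∑ k, ∑ l, ∑ p, cyclicSum a j k l p • (e j * e k * e l * e p)
      = ∑ j, ∑ k, ∑ l, ∑ p, a j k l p • (e j * e k * e l * e p)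
        + ∑ j, ∑ k, ∑ l, ∑ p, a j l p k • (e j * e k * e l * e p)
        + ∑ j, ∑ k, ∑ l, ∑ p, a j p k l • (e j * e k * e l * e p) := by
    simp only [cyclicSum, add_smul, sum_add_distrib]
  rw [sum_cyclicSum_smul_eq_sum_strictMono h₁ h₂ h₃ he, quartic_cycle_sq_eq h₂ h₃ he,
    quartic_cycle_eq h₂ h₃ he] at h
  linear_combination (norm := module) (-(1 / 3) : ℝ) • h

end Quartic

theorem mQF_ι_mul_ι_add_swap {𝔤 : Type*} [AddCommGroup 𝔤] [Module ℝ 𝔤] {𝔪 : Submodule ℝ 𝔤}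
    (B : LinearMap.BilinForm ℝ 𝔤) (x y : 𝔪) :
    CliffordAlgebra.ι (mQF 𝔪 B) x * CliffordAlgebra.ι (mQF 𝔪 B) y
      + CliffordAlgebra.ι (mQF 𝔪 B) y * CliffordAlgebra.ι (mQF 𝔪 B) x
      = (-(B x y + B y x)) • 1 := by
  rw [CliffordAlgebra.ι_mul_ι_add_swap, Algebra.algebraMap_eq_smul_one, mQF,
    LinearMap.BilinMap.polar_toQuadraticMap]
  simp only [LinearMap.compl₁₂_apply, Submodule.coe_subtype, LinearMap.neg_apply, neg_add]

section LieProjection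
variable {𝔤 : Type*} [LieRing 𝔤] [LieAlgebra ℝ 𝔤] {𝔥 𝔪 : Submodule ℝ 𝔤}
  {p𝔥 p𝔪 : 𝔤 →ₗ[ℝ] 𝔤} {Q : LinearMap.BilinForm ℝ 𝔤}
  (hsum : ∀ x, p𝔥 x + p𝔪 x = x) (hmem𝔪 : ∀ x, p𝔪 x ∈ 𝔪)
  (hQsymm : ∀ x y, Q x y = Q y x) (hQinv : ∀ w u v : 𝔤, Q ⁅w, u⁆ v + Q u ⁅w, v⁆ = 0)
  (hQ𝔥𝔪 : ∀ x ∈ 𝔥, ∀ y ∈ 𝔪, Q x y = 0)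
include hsum hmem𝔪 hQsymm hQinv hQ𝔥𝔪

theorem apply_lie_eq_apply_proj (x y : 𝔤) {h : 𝔤} (hh : h ∈ 𝔥) :
    Q x ⁅y, h⁆ = Q (p𝔥 ⁅x, y⁆) h := by
  have hinv := hQinv y x h
  have h𝔪 : Q (p𝔪 ⁅x, y⁆) h = 0 := by rw [hQsymm]; exact hQ𝔥𝔪 h hh _ (hmem𝔪 _)
  calc Q x ⁅y, h⁆ = Q ⁅x, y⁆ h := by
        rw [← lie_skew x y, map_neg, LinearMap.neg_apply]; linarith
    _ = Q (p𝔥 ⁅x, y⁆) h := by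
        conv_lhs => rw [← hsum ⁅x, y⁆]
        rw [map_add, LinearMap.add_apply, h𝔪, add_zero]

theorem apply_jacH (hmem𝔥 : ∀ x, p𝔥 x ∈ 𝔥) (x y z w : 𝔤) :
    Q x (jacH p𝔥 y z w)
      = Q (p𝔥 ⁅x, y⁆) (p𝔥 ⁅z, w⁆) + Q (p𝔥 ⁅x, z⁆) (p𝔥 ⁅w, y⁆)
        + Q (p𝔥 ⁅x, w⁆) (p𝔥 ⁅y, z⁆) := by
  simp only [jacH, map_add,
    apply_lie_eq_apply_proj hsum hmem𝔪 hQsymm hQinv hQ𝔥𝔪 _ _ (hmem𝔥 _)]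

end LieProjection

theorem stmt12_general
    {𝔤 : Type*} [LieRing 𝔤] [LieAlgebra ℝ 𝔤]
    (𝔥 𝔪 : Submodule ℝ 𝔤)
    (p𝔥 p𝔪 : 𝔤 →ₗ[ℝ] 𝔤)
    (hsum : ∀ x, p𝔥 x + p𝔪 x = x)
    (hmem𝔥 : ∀ x, p𝔥 x ∈ 𝔥) (hmem𝔪 : ∀ x, p𝔪 x ∈ 𝔪)
    (Q : LinearMap.BilinForm ℝ 𝔤)
    (hQsymm : ∀ x y, Q x y = Q y x)
    (hQinv : ∀ w u v : 𝔤, Q ⁅w, u⁆ v + Q u ⁅w, v⁆ = 0)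
    (hQ𝔥𝔪 : ∀ x ∈ 𝔥, ∀ y ∈ 𝔪, Q x y = 0)
    {n : ℕ} (Z : Fin n → 𝔤) (hZ𝔪 : ∀ i, Z i ∈ 𝔪)
    (hZon : ∀ i j, Q (Z i) (Z j) = if i = j then 1 else 0) :
    let ι := CliffordAlgebra.ι (mQF 𝔪 Q)
    (-(1 / 16) : ℝ) • ∑ j, ∑ k, ∑ l, ∑ p,
        Q (p𝔥 ⁅Z j, Z k⁆) (p𝔥 ⁅Z l, Z p⁆) •
          (ι ⟨Z j, hZ𝔪 j⟩ * ι ⟨Z k, hZ𝔪 k⟩ * ι ⟨Z l, hZ𝔪 l⟩ * ι ⟨Z p, hZ𝔪 p⟩) =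
      ((1 / 8 : ℝ) * ∑ i, ∑ j, Q (p𝔥 ⁅Z i, Z j⁆) (p𝔥 ⁅Z i, Z j⁆)) •
          (1 : CliffordAlgebra (mQF 𝔪 Q))
        - (1 / 2 : ℝ) • ∑ i, ∑ j, ∑ k, ∑ l,
            (if i < j ∧ j < k ∧ k < l then
              Q (Z i) (jacH p𝔥 (Z j) (Z k) (Z l)) •
                (ι ⟨Z i, hZ𝔪 i⟩ * ι ⟨Z j, hZ𝔪 j⟩ * ι ⟨Z k, hZ𝔪 k⟩ * ι ⟨Z l, hZ𝔪 l⟩)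
             else 0) := by
  intro ι
  have he : ∀ i j, ι ⟨Z i, hZ𝔪 i⟩ * ι ⟨Z j, hZ𝔪 j⟩ + ι ⟨Z j, hZ𝔪 j⟩ * ι ⟨Z i, hZ𝔪 i⟩
      = (if i = j then -2 else 0 : ℝ) • 1 := fun i j => by
    rw [mQF_ι_mul_ι_add_swap, Submodule.coe_mk, Submodule.coe_mk, hZon, hZon]
    by_cases hij : i = j
    · subst hij; norm_num
    · simp [hij, Ne.symm hij]
  have h₁ : ∀ j k l p, Q (p𝔥 ⁅Z k, Z j⁆) (p𝔥 ⁅Z l, Z p⁆) = -Q (p𝔥 ⁅Z j, Z k⁆) (p𝔥 ⁅Z l, Z p⁆) :=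
    fun j k l p => by rw [← lie_skew (Z j), map_neg, map_neg, LinearMap.neg_apply, neg_neg]
  have h₂ : ∀ j k l p, Q (p𝔥 ⁅Z j, Z k⁆) (p𝔥 ⁅Z p, Z l⁆) = -Q (p𝔥 ⁅Z j, Z k⁆) (p𝔥 ⁅Z l, Z p⁆) :=
    fun j k l p => by rw [← lie_skew (Z l), map_neg, map_neg, neg_neg]
  rw [quartic_eq h₁ h₂ (fun _ _ _ _ => hQsymm _ _) he]
  simp only [apply_jacH hsum hmem𝔪 hQsymm hQinv hQ𝔥𝔪 hmem𝔥, cyclicSum]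
  module

/-- The lifted Casimir element
`C̃_𝔥 = −(1/16) Σ_{j,k,l,p} Q_𝔥([Z_j,Z_k]_𝔥,[Z_l,Z_p]_𝔥) Z_j·Z_k·Z_l·Z_p` of `Cl(𝔪)`
has only terms of degree zero and four:
`C̃_𝔥 = (1/8) Σ_{i,j} Q_𝔥([Z_i,Z_j]_𝔥,[Z_i,Z_j]_𝔥)·1
      − (1/2) Σ_{i<j<k<l} ⟨Z_i, Jac_𝔥(Z_j,Z_k,Z_l)⟩ Z_i·Z_j·Z_k·Z_l`, for every `n ≥ 3`. -/
theorem stmt12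
    {𝔤 : Type*} [LieRing 𝔤] [LieAlgebra ℝ 𝔤] [FiniteDimensional ℝ 𝔤]
    (𝔥 𝔪 : Submodule ℝ 𝔤)
    (p𝔥 p𝔪 : 𝔤 →ₗ[ℝ] 𝔤)
    (hsum : ∀ x, p𝔥 x + p𝔪 x = x)
    (hmem𝔥 : ∀ x, p𝔥 x ∈ 𝔥) (hmem𝔪 : ∀ x, p𝔪 x ∈ 𝔪)
    (hid𝔥 : ∀ x ∈ 𝔥, p𝔥 x = x) (hid𝔪 : ∀ x ∈ 𝔪, p𝔪 x = x)
    (hsub : ∀ x ∈ 𝔥, ∀ y ∈ 𝔥, ⁅x, y⁆ ∈ 𝔥)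
    (hhm : ∀ x ∈ 𝔥, ∀ y ∈ 𝔪, ⁅x, y⁆ ∈ 𝔪)
    (Q : LinearMap.BilinForm ℝ 𝔤)
    (hQsymm : ∀ x y, Q x y = Q y x)
    (hQinv : ∀ w u v : 𝔤, Q ⁅w, u⁆ v + Q u ⁅w, v⁆ = 0)
    (hQ𝔥𝔪 : ∀ x ∈ 𝔥, ∀ y ∈ 𝔪, Q x y = 0)
    (hQpos𝔪 : ∀ x ∈ 𝔪, x ≠ 0 → 0 < Q x x)
    (hQ𝔥nd : ∀ x ∈ 𝔥, (∀ y ∈ 𝔥, Q x y = 0) → x = 0)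
    {n : ℕ} (Z : Fin n → 𝔤) (hZ𝔪 : ∀ i, Z i ∈ 𝔪)
    (hZon : ∀ i j, Q (Z i) (Z j) = if i = j then 1 else 0)
    (hZspan : Submodule.span ℝ (Set.range Z) = 𝔪)
    (hn : 3 ≤ n) :
    let ι := CliffordAlgebra.ι (mQF 𝔪 Q)
    (-(1 / 16) : ℝ) • ∑ j, ∑ k, ∑ l, ∑ p,
        Q (p𝔥 ⁅Z j, Z k⁆) (p𝔥 ⁅Z l, Z p⁆) •
          (ι ⟨Z j, hZ𝔪 j⟩ * ι ⟨Z k, hZ𝔪 k⟩ * ι ⟨Z l, hZ𝔪 l⟩ * ι ⟨Z p, hZ𝔪 p⟩) =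
      ((1 / 8 : ℝ) * ∑ i, ∑ j, Q (p𝔥 ⁅Z i, Z j⁆) (p𝔥 ⁅Z i, Z j⁆)) •
          (1 : CliffordAlgebra (mQF 𝔪 Q))
        - (1 / 2 : ℝ) • ∑ i, ∑ j, ∑ k, ∑ l,
            (if i < j ∧ j < k ∧ k < l then
              Q (Z i) (jacH p𝔥 (Z j) (Z k) (Z l)) •
                (ι ⟨Z i, hZ𝔪 i⟩ * ι ⟨Z j, hZ𝔪 j⟩ * ι ⟨Z k, hZ𝔪 k⟩ * ι ⟨Z l, hZ𝔪 l⟩)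
             else 0) :=
  stmt12_general 𝔥 𝔪 p𝔥 p𝔪 hsum hmem𝔥 hmem𝔪 Q hQsymm hQinv hQ𝔥𝔪 Z hZ𝔪 hZon
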